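/- arXiv:2602.08906 — 2 statements merged into one kernel-verified Lean document; each statement's English description precedes it below -/
import Mathlib

section
/- With the setting of the definition of B̄ above, the estimate ‖B̄(τ+h) − B̄(τ) − B̄'(τ)h‖_{(C^{0,α}([0,T];Z))*} ≤ (2(n−1)/(α+1)) · max_{1≤i≤n−1} ‖ψ_i‖_{Z*} · ‖h‖^{α+1} holds for all τ, h ∈ ℝⁿ. -/
open Set MeasureTheory Filter Topology

/-- The signed characteristic function `χ̄_{[a,b)}`. -/
noncomputable def chiBar (a b t : ℝ) : ℝ :=
  if a ≤ t ∧ t < b then 1 else if b < t ∧ t ≤ a then -1 else 0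

/-- The Euclidean norm on `ℝ^m`. -/
noncomputable def eucNorm {m : ℕ} (h : Fin m → ℝ) : ℝ :=
  Real.sqrt (∑ i, (h i) ^ 2)

/-- `v : ℝ → Z` is the constant continuation to `ℝ` of an `α`-Hölder continuous function
on `[0,T]` whose `C^{0,α}` norm (sup norm plus Hölder seminorm) is at most `M`. -/
def ConstContHolderLe {Z : Type*} [NormedAddCommGroup Z] (α T M : ℝ) (v : ℝ → Z) : Prop :=
  Continuous v ∧
  (∀ t : ℝ, v t = v (min (max t 0) T)) ∧
  ∃ C₁ C₂ : ℝ, 0 ≤ C₁ ∧ 0 ≤ C₂ ∧ C₁ + C₂ ≤ M ∧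
    (∀ t ∈ Icc (0:ℝ) T, ‖v t‖ ≤ C₁) ∧
    (∀ s ∈ Icc (0:ℝ) T, ∀ t ∈ Icc (0:ℝ) T, ‖v s - v t‖ ≤ C₂ * |s - t| ^ α)

/-- The pairing `⟨B̄(τ), v⟩ = ∫_ℝ Σ_i χ̄_{[τ_i,τ_{i+1})}(t) ⟨ψ_i, V(t)⟩ dt`. -/
noncomputable def pairB {Z : Type*} [NormedAddCommGroup Z] [NormedSpace ℝ Z] {n : ℕ}
    (ψ : Fin n → Z →L[ℝ] ℝ) (τ : Fin (n + 1) → ℝ) (v : ℝ → Z) : ℝ :=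
  ∫ t : ℝ, ∑ i : Fin n, chiBar (τ i.castSucc) (τ i.succ) t * ψ i (v t)

/-- The candidate derivative pairing
`⟨B̄'(τ)h, v⟩ = Σ_i ⟨ψ_i, h_{i+1} V(τ_{i+1}) − h_i V(τ_i)⟩`. -/
noncomputable def pairBDeriv {Z : Type*} [NormedAddCommGroup Z] [NormedSpace ℝ Z] {n : ℕ}
    (ψ : Fin n → Z →L[ℝ] ℝ) (τ h : Fin (n + 1) → ℝ) (v : ℝ → Z) : ℝ :=
  ∑ i : Fin n,
    (h i.succ * ψ i (v (τ i.succ)) - h i.castSucc * ψ i (v (τ i.castSucc)))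

lemma chiBar_mul_of_le {a b : ℝ} (hab : a ≤ b) (f : ℝ → ℝ) :
    (fun t => chiBar a b t * f t) = (Set.Ico a b).indicator f := by
  funext t
  simp only [chiBar, Set.indicator_apply, Set.mem_Ico]
  split_ifs with h1 h2
  · exact one_mul _
  · exact absurd (h2.2.trans hab) (not_le.mpr h2.1)
  · exact zero_mul _

lemma chiBar_mul_of_ge {a b : ℝ} (hab : b ≤ a) (f : ℝ → ℝ) :
    (fun t => chiBar a b t * f t) = fun t => -((Set.Ioc b a).indicator f t) := by
  funext t
  simp only [chiBar, Set.indicator_apply, Set.mem_Ioc]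
  split_ifs with h1 h2
  · exact absurd (h1.2.trans h2.1) (lt_irrefl t)
  · exact absurd (h1.2.trans_le (hab.trans h1.1)) (lt_irrefl t)
  · exact neg_one_mul (f t)
  · rw [zero_mul, neg_zero]

lemma integral_chiBar_mul (a b : ℝ) (f : ℝ → ℝ) (hf : Continuous f) :
    ∫ t, chiBar a b t * f t = ∫ t in a..b, f t := by
  rcases le_total a b with hab | hab
  · rw [chiBar_mul_of_le hab, MeasureTheory.integral_indicator measurableSet_Ico,
      setIntegral_congr_set Ico_ae_eq_Ioc, intervalIntegral.integral_of_le hab]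
  · rw [chiBar_mul_of_ge hab, integral_neg,
      MeasureTheory.integral_indicator measurableSet_Ioc,
      ← intervalIntegral.integral_of_le hab, ← intervalIntegral.integral_symm]

lemma integrable_chiBar_mul (a b : ℝ) (f : ℝ → ℝ) (hf : Continuous f) :
    Integrable (fun t => chiBar a b t * f t) := by
  rcases le_total a b with hab | hab
  · rw [chiBar_mul_of_le hab]
    exact (integrable_indicator_iff measurableSet_Ico).mpr
      (hf.integrableOn_Icc.mono_set Ico_subset_Icc_self)
  · rw [chiBar_mul_of_ge hab]
    exact ((integrable_indicator_iff measurableSet_Ioc).mpr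
      (hf.integrableOn_Icc.mono_set Ioc_subset_Icc_self)).neg

lemma key_est (F : ℝ → ℝ) (hF : Continuous F) {C α : ℝ} (hC : 0 ≤ C) (hα : 0 < α)
    (s h : ℝ) (hHol : ∀ t : ℝ, |F t - F s| ≤ C * |t - s| ^ α) :
    |(∫ t in s..(s + h), F t) - h * F s| ≤ C * |h| ^ (α + 1) / (α + 1) := by
  have hα1 : (0:ℝ) < α + 1 := by linarith
  have hcont : Continuous fun t : ℝ => C * |t - s| ^ α :=
    continuous_const.mul ((Real.continuous_rpow_const hα.le).comp
      ((continuous_id.sub continuous_const).abs))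
  have hconst : h * F s = ∫ t in s..(s + h), F s := by
    rw [intervalIntegral.integral_const]; simp
  rw [hconst, ← intervalIntegral.integral_sub (hF.intervalIntegrable _ _)
    (intervalIntegrable_const)]
  rcases le_or_gt 0 h with hh | hh
  · have hss : s ≤ s + h := by linarith
    have b1 : |∫ t in s..(s+h), (F t - F s)| ≤ ∫ t in s..(s+h), |F t - F s| :=
      intervalIntegral.abs_integral_le_integral_abs hss
    have b2 : (∫ t in s..(s+h), |F t - F s|) ≤ ∫ t in s..(s+h), C * |t - s| ^ α :=
      intervalIntegral.integral_mono_on hss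
        ((hF.sub continuous_const).abs.intervalIntegrable _ _)
        (hcont.intervalIntegrable _ _) (fun t _ => hHol t)
    have b3 : (∫ t in s..(s+h), C * |t - s| ^ α) = C * |h| ^ (α + 1) / (α + 1) := by
      rw [intervalIntegral.integral_const_mul]
      have e1 : (∫ t in s..(s+h), |t - s| ^ α) = ∫ u in (0:ℝ)..h, |u| ^ α := by
        have := intervalIntegral.integral_comp_sub_right (a := s) (b := s + h)
          (fun u => |u| ^ α) s
        simpa using this
      have e2 : (∫ u in (0:ℝ)..h, |u| ^ α) = ∫ u in (0:ℝ)..h, u ^ α := by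
        apply intervalIntegral.integral_congr
        intro u hu
        rw [Set.uIcc_of_le hh] at hu
        show |u| ^ α = u ^ α
        rw [abs_of_nonneg hu.1]
      rw [e1, e2, integral_rpow (Or.inl (by linarith : (-1:ℝ) < α)),
        Real.zero_rpow (by linarith : α + 1 ≠ 0), abs_of_nonneg hh]
      ring
    exact b1.trans (b2.trans_eq b3)
  · have hss : s + h ≤ s := by linarith
    rw [intervalIntegral.integral_symm, abs_neg]
    have b1 : |∫ t in (s+h)..s, (F t - F s)| ≤ ∫ t in (s+h)..s, |F t - F s| :=
      intervalIntegral.abs_integral_le_integral_abs hss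
    have b2 : (∫ t in (s+h)..s, |F t - F s|) ≤ ∫ t in (s+h)..s, C * |t - s| ^ α :=
      intervalIntegral.integral_mono_on hss
        ((hF.sub continuous_const).abs.intervalIntegrable _ _)
        (hcont.intervalIntegrable _ _) (fun t _ => hHol t)
    have b3 : (∫ t in (s+h)..s, C * |t - s| ^ α) = C * |h| ^ (α + 1) / (α + 1) := by
      rw [intervalIntegral.integral_const_mul]
      have e1 : (∫ t in (s+h)..s, |t - s| ^ α) = ∫ u in h..(0:ℝ), |u| ^ α := by
        have := intervalIntegral.integral_comp_sub_right (a := s + h) (b := s)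
          (fun u => |u| ^ α) s
        simpa using this
      have e2 : (∫ u in h..(0:ℝ), |u| ^ α) = ∫ u in h..(0:ℝ), (-u) ^ α := by
        apply intervalIntegral.integral_congr
        intro u hu
        rw [Set.uIcc_of_le hh.le] at hu
        show |u| ^ α = (-u) ^ α
        rw [abs_of_nonpos hu.2]
      have e3 : (∫ u in h..(0:ℝ), (-u) ^ α) = ∫ u in (0:ℝ)..(-h), u ^ α := by
        have := intervalIntegral.integral_comp_neg (a := h) (b := (0:ℝ))
          (fun u => u ^ α)
        simpa using this
      rw [e1, e2, e3, integral_rpow (Or.inl (by linarith : (-1:ℝ) < α)),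
        Real.zero_rpow (by linarith : α + 1 ≠ 0), abs_of_neg hh]
      ring
    exact b1.trans (b2.trans_eq b3)

lemma seg_est (F : ℝ → ℝ) (hF : Continuous F) {C α : ℝ} (hC : 0 ≤ C) (hα : 0 < α)
    (hHol : ∀ s t : ℝ, |F s - F t| ≤ C * |s - t| ^ α) (a b ha hb : ℝ) :
    |(∫ t in (a + ha)..(b + hb), F t) - (∫ t in a..b, F t) - (hb * F b - ha * F a)|
      ≤ C * |hb| ^ (α + 1) / (α + 1) + C * |ha| ^ (α + 1) / (α + 1) := by
  have iF : ∀ x y : ℝ, IntervalIntegrable F volume x y := fun x y => hF.intervalIntegrable x y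
  have e1 : (∫ t in (a + ha)..(b + hb), F t)
      = (∫ t in (a + ha)..a, F t) + (∫ t in a..b, F t) + (∫ t in b..(b + hb), F t) := by
    rw [intervalIntegral.integral_add_adjacent_intervals (iF (a + ha) a) (iF a b),
      intervalIntegral.integral_add_adjacent_intervals (iF (a + ha) b) (iF b (b + hb))]
  have e2 : (∫ t in (a + ha)..a, F t) = -(∫ t in a..(a + ha), F t) :=
    intervalIntegral.integral_symm _ _
  have k1 := key_est F hF hC hα b hb (fun t => hHol t b)
  have k2 := key_est F hF hC hα a ha (fun t => hHol t a)
  have e3 : (∫ t in (a + ha)..(b + hb), F t) - (∫ t in a..b, F t) - (hb * F b - ha * F a)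
      = ((∫ t in b..(b + hb), F t) - hb * F b) - ((∫ t in a..(a + ha), F t) - ha * F a) := by
    rw [e1, e2]; ring
  rw [e3]
  exact (abs_sub _ _).trans (add_le_add k1 k2)

lemma clamp_mem {T : ℝ} (hT : 0 ≤ T) (t : ℝ) : min (max t 0) T ∈ Icc (0:ℝ) T :=
  ⟨le_min (le_max_right t 0) hT, min_le_right _ _⟩

lemma clamp_lip (T s t : ℝ) : |min (max s 0) T - min (max t 0) T| ≤ |s - t| := by
  have h1 := abs_min_sub_min_le_max (max s 0) T (max t 0) T
  have h2 := abs_max_sub_max_le_abs s t 0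
  simp only [sub_self, abs_zero] at h1
  calc |min (max s 0) T - min (max t 0) T| ≤ max |max s 0 - max t 0| 0 := h1
    _ = |max s 0 - max t 0| := max_eq_left (abs_nonneg _)
    _ ≤ |s - t| := h2

lemma holder_global {Z : Type*} [NormedAddCommGroup Z] {α T : ℝ} (hT : 0 ≤ T)
    (hα : 0 < α) {v : ℝ → Z} (hv : ConstContHolderLe α T 1 v) :
    ∀ s t : ℝ, ‖v s - v t‖ ≤ |s - t| ^ α := by
  obtain ⟨-, hclamp, C₁, C₂, hC₁, hC₂, hsum, -, hHol⟩ := hv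
  intro s t
  calc ‖v s - v t‖ = ‖v (min (max s 0) T) - v (min (max t 0) T)‖ := by
        rw [← hclamp s, ← hclamp t]
    _ ≤ C₂ * |min (max s 0) T - min (max t 0) T| ^ α :=
        hHol _ (clamp_mem hT s) _ (clamp_mem hT t)
    _ ≤ 1 * |s - t| ^ α := by
        apply mul_le_mul (by linarith)
          (Real.rpow_le_rpow (abs_nonneg _) (clamp_lip T s t) hα.le)
          (Real.rpow_nonneg (abs_nonneg _) _) zero_le_one
    _ = |s - t| ^ α := one_mul _

lemma abs_le_eucNorm {m : ℕ} (h : Fin m → ℝ) (i : Fin m) : |h i| ≤ eucNorm h := by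
  rw [eucNorm, ← Real.sqrt_sq_eq_abs]
  exact Real.sqrt_le_sqrt (Finset.single_le_sum (fun j _ => sq_nonneg (h j))
    (Finset.mem_univ i))

/-- The quantitative remainder estimate
`‖B̄(τ+h) − B̄(τ) − B̄'(τ)h‖_{(C^{0,α}([0,T];Z))*} ≤ (2(n−1)/(α+1)) max_i ‖ψ_i‖ ‖h‖^{α+1}`,
expressed through the dual norm as a uniform estimate over the unit ball of
`C^{0,α}([0,T];Z)` (here with `n` form functions `ψ_0, …, ψ_{n−1}` and `n+1` switching
points, so `2(n−1)` becomes `2n`). -/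
theorem stmt4 {Z : Type*} [NormedAddCommGroup Z] [NormedSpace ℝ Z] (n : ℕ)
    (T α : ℝ) (hT : 0 < T) (hα : α ∈ Set.Ioo (0:ℝ) 1) (ψ : Fin n → Z →L[ℝ] ℝ) :
    ∀ τ h : Fin (n + 1) → ℝ, ∀ v : ℝ → Z, ConstContHolderLe α T 1 v →
      |pairB ψ (τ + h) v - pairB ψ τ v - pairBDeriv ψ τ h v|
        ≤ (2 * n / (α + 1)) * (⨆ i : Fin n, ‖ψ i‖) * eucNorm h ^ (α + 1) := by
  intro τ h v hv
  obtain ⟨hα0, hα1⟩ := hα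
  have hα1' : (0:ℝ) < α + 1 := by linarith
  have hcont : Continuous v := hv.1
  have hHol : ∀ s t : ℝ, ‖v s - v t‖ ≤ |s - t| ^ α := holder_global hT.le hα0 hv
  have hEnn : 0 ≤ eucNorm h ^ (α + 1) := Real.rpow_nonneg (Real.sqrt_nonneg _) _
  rcases Nat.eq_zero_or_pos n with rfl | hn
  · simp [pairB, pairBDeriv]
  set E := eucNorm h ^ (α + 1) with hE
  set M := ⨆ i : Fin n, ‖ψ i‖ with hM
  have hψM : ∀ i : Fin n, ‖ψ i‖ ≤ M := fun i =>
    le_ciSup (f := fun j : Fin n => ‖ψ j‖) (Set.Finite.bddAbove (Set.finite_range _)) i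
  have hMnn : 0 ≤ M := le_trans (norm_nonneg _) (hψM ⟨0, hn⟩)
  have hpair : ∀ σ : Fin (n + 1) → ℝ, pairB ψ σ v
      = ∑ i : Fin n, ∫ t in (σ i.castSucc)..(σ i.succ), ψ i (v t) := by
    intro σ
    unfold pairB
    rw [MeasureTheory.integral_finset_sum]
    · exact Finset.sum_congr rfl fun i _ =>
        integral_chiBar_mul _ _ _ ((ψ i).continuous.comp hcont)
    · exact fun i _ => integrable_chiBar_mul _ _ _ ((ψ i).continuous.comp hcont)
  rw [hpair (τ + h), hpair τ]
  unfold pairBDeriv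
  rw [← Finset.sum_sub_distrib, ← Finset.sum_sub_distrib]
  have bound : ∀ i : Fin n,
      |((∫ t in ((τ + h) i.castSucc)..((τ + h) i.succ), ψ i (v t))
          - (∫ t in (τ i.castSucc)..(τ i.succ), ψ i (v t)))
        - (h i.succ * ψ i (v (τ i.succ)) - h i.castSucc * ψ i (v (τ i.castSucc)))|
      ≤ 2 * M * E / (α + 1) := by
    intro i
    have hFc : Continuous fun t => ψ i (v t) := (ψ i).continuous.comp hcont
    have hFH : ∀ s t : ℝ, |ψ i (v s) - ψ i (v t)| ≤ ‖ψ i‖ * |s - t| ^ α := by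
      intro s t
      calc |ψ i (v s) - ψ i (v t)| = ‖ψ i (v s - v t)‖ := by rw [map_sub]; rfl
        _ ≤ ‖ψ i‖ * ‖v s - v t‖ := (ψ i).le_opNorm _
        _ ≤ ‖ψ i‖ * |s - t| ^ α := mul_le_mul_of_nonneg_left (hHol s t) (norm_nonneg _)
    have hseg := seg_est (fun t => ψ i (v t)) hFc (norm_nonneg (ψ i)) hα0 hFH
      (τ i.castSucc) (τ i.succ) (h i.castSucc) (h i.succ)
    have hterm : ∀ j : Fin (n + 1),
        ‖ψ i‖ * |h j| ^ (α + 1) / (α + 1) ≤ M * E / (α + 1) := by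
      intro j
      apply (div_le_div_iff_of_pos_right hα1').mpr
      exact mul_le_mul (hψM i)
        (Real.rpow_le_rpow (abs_nonneg _) (abs_le_eucNorm h j) (by linarith))
        (Real.rpow_nonneg (abs_nonneg _) _) hMnn
    have e4 : (τ + h) i.castSucc = τ i.castSucc + h i.castSucc := rfl
    have e5 : (τ + h) i.succ = τ i.succ + h i.succ := rfl
    rw [e4, e5]
    calc |((∫ t in (τ i.castSucc + h i.castSucc)..(τ i.succ + h i.succ), ψ i (v t))
          - (∫ t in (τ i.castSucc)..(τ i.succ), ψ i (v t)))
        - (h i.succ * ψ i (v (τ i.succ)) - h i.castSucc * ψ i (v (τ i.castSucc)))|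
        ≤ ‖ψ i‖ * |h i.succ| ^ (α + 1) / (α + 1)
          + ‖ψ i‖ * |h i.castSucc| ^ (α + 1) / (α + 1) := hseg
      _ ≤ M * E / (α + 1) + M * E / (α + 1) := add_le_add (hterm _) (hterm _)
      _ = 2 * M * E / (α + 1) := by ring
  calc |∑ i : Fin n, (((∫ t in ((τ + h) i.castSucc)..((τ + h) i.succ), ψ i (v t))
          - (∫ t in (τ i.castSucc)..(τ i.succ), ψ i (v t)))
        - (h i.succ * ψ i (v (τ i.succ)) - h i.castSucc * ψ i (v (τ i.castSucc))))|
      ≤ ∑ i : Fin n, |((∫ t in ((τ + h) i.castSucc)..((τ + h) i.succ), ψ i (v t))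
          - (∫ t in (τ i.castSucc)..(τ i.succ), ψ i (v t)))
        - (h i.succ * ψ i (v (τ i.succ)) - h i.castSucc * ψ i (v (τ i.castSucc)))| :=
        Finset.abs_sum_le_sum_abs _ _
    _ ≤ ∑ _i : Fin n, 2 * M * E / (α + 1) := Finset.sum_le_sum fun i _ => bound i
    _ = n * (2 * M * E / (α + 1)) := by
        rw [Finset.sum_const, Finset.card_univ, Fintype.card_fin, nsmul_eq_mul]
    _ = 2 * n / (α + 1) * M * E := by ring
end

section
/- With τ̂ as in the recursive averaging scheme, for every k = 1,…,n one has Σ_{j=1}^k (τ_j − τ̂_j) ≥ 0, and equality Σ_{j=1}^{m_i} (τ_j − τ̂_j) = 0 holds at each block endpoint m_i, i = 1,…,ℓ. -/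
/-- `σ_{j,k} = (1/(k−j+1)) Σ_{r=j}^k τ_r`. -/
noncomputable def sigmaAvg (τ : ℕ → ℝ) (j k : ℕ) : ℝ :=
  (∑ r ∈ Finset.Icc j k, τ r) / ((k - j + 1 : ℕ) : ℝ)

/-- The smallest index `j ∈ (m, n]` minimizing `σ_{m+1, j}` (and `n` once `m ≥ n`). -/
noncomputable def nextIdx (τ : ℕ → ℝ) (n m : ℕ) : ℕ :=
  if m < n then
    sInf {j | m < j ∧ j ≤ n ∧
      ∀ k, m < k → k ≤ n → sigmaAvg τ (m + 1) j ≤ sigmaAvg τ (m + 1) k}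
  else n

/-- The block endpoints `0 = m₀ < m₁ < … < m_ℓ = n` of the recursive averaging scheme. -/
noncomputable def mIdx (τ : ℕ → ℝ) (n : ℕ) : ℕ → ℕ
  | 0 => 0
  | i + 1 => nextIdx τ n (mIdx τ n i)

/-- The index `i` of the block containing `j`, i.e. with `m_i < j ≤ m_{i+1}`. -/
noncomputable def blockOf (τ : ℕ → ℝ) (n j : ℕ) : ℕ :=
  sInf {i | j ≤ mIdx τ n (i + 1)}

/-- `τ̂_j = σ_{m_i+1, m_{i+1}}` for `m_i < j ≤ m_{i+1}`. -/
noncomputable def tauHat (τ : ℕ → ℝ) (n j : ℕ) : ℝ :=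
  sigmaAvg τ (mIdx τ n (blockOf τ n j) + 1) (mIdx τ n (blockOf τ n j + 1))

section Aux

variable (τ : ℕ → ℝ) (n : ℕ)

lemma nextIdx_set_nonempty {m : ℕ} (h : m < n) :
    {j | m < j ∧ j ≤ n ∧
      ∀ k, m < k → k ≤ n → sigmaAvg τ (m + 1) j ≤ sigmaAvg τ (m + 1) k}.Nonempty := by
  obtain ⟨j, hj, hmin⟩ := Finset.exists_min_image (Finset.Icc (m + 1) n)
    (fun k => sigmaAvg τ (m + 1) k) ⟨m + 1, by simp [Finset.mem_Icc]; omega⟩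
  rw [Finset.mem_Icc] at hj
  exact ⟨j, by omega, hj.2, fun k hk1 hk2 => hmin k (Finset.mem_Icc.mpr ⟨by omega, hk2⟩)⟩

lemma nextIdx_spec {m : ℕ} (h : m < n) :
    m < nextIdx τ n m ∧ nextIdx τ n m ≤ n ∧
      ∀ k, m < k → k ≤ n → sigmaAvg τ (m + 1) (nextIdx τ n m) ≤ sigmaAvg τ (m + 1) k := by
  unfold nextIdx
  rw [if_pos h]
  exact Nat.sInf_mem (nextIdx_set_nonempty τ n h)

lemma mIdx_le : ∀ i, mIdx τ n i ≤ n := by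
  intro i
  induction i with
  | zero => simp [mIdx]
  | succ i ih =>
    show nextIdx τ n (mIdx τ n i) ≤ n
    by_cases h : mIdx τ n i < n
    · exact (nextIdx_spec τ n h).2.1
    · unfold nextIdx; rw [if_neg h]

lemma mIdx_succ_eq {i : ℕ} (h : mIdx τ n i = n) : mIdx τ n (i + 1) = n := by
  show nextIdx τ n (mIdx τ n i) = n
  unfold nextIdx
  rw [h, if_neg (lt_irrefl n)]

lemma mIdx_mono : Monotone (mIdx τ n) := by
  apply monotone_nat_of_le_succ
  intro i
  by_cases h : mIdx τ n i < n
  · exact le_of_lt (nextIdx_spec τ n h).1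
  · have : mIdx τ n i = n := le_antisymm (mIdx_le τ n i) (by omega)
    rw [this, mIdx_succ_eq τ n this]

lemma mIdx_ge : ∀ i, min i n ≤ mIdx τ n i := by
  intro i
  induction i with
  | zero => simp
  | succ i ih =>
    by_cases h : mIdx τ n i < n
    · have := (nextIdx_spec τ n h).1
      have h2 : mIdx τ n i < mIdx τ n (i + 1) := this
      omega
    · have : mIdx τ n i = n := le_antisymm (mIdx_le τ n i) (by omega)
      rw [mIdx_succ_eq τ n this]; omega

lemma blockOf_set_nonempty {j : ℕ} (h1 : 1 ≤ j) (h2 : j ≤ n) :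
    {i | j ≤ mIdx τ n (i + 1)}.Nonempty := by
  refine ⟨j - 1, ?_⟩
  have := mIdx_ge τ n j
  simp only [Set.mem_setOf_eq]
  have hj : j - 1 + 1 = j := by omega
  rw [hj]
  omega

lemma blockOf_spec {j : ℕ} (h1 : 1 ≤ j) (h2 : j ≤ n) :
    mIdx τ n (blockOf τ n j) < j ∧ j ≤ mIdx τ n (blockOf τ n j + 1) := by
  have hmem := Nat.sInf_mem (blockOf_set_nonempty τ n h1 h2)
  constructor
  · rcases Nat.eq_zero_or_pos (blockOf τ n j) with h | h
    · rw [h]; simp [mIdx]; omega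
    · have hnot : blockOf τ n j - 1 ∉ {i | j ≤ mIdx τ n (i + 1)} :=
        Nat.notMem_of_lt_sInf (by
          have hdef : blockOf τ n j = sInf {i | j ≤ mIdx τ n (i + 1)} := rfl
          omega)
      simp only [Set.mem_setOf_eq, not_le] at hnot
      have : blockOf τ n j - 1 + 1 = blockOf τ n j := by omega
      rwa [this] at hnot
  · exact hmem

lemma blockOf_eq {i j : ℕ} (h1 : mIdx τ n i < j) (h2 : j ≤ mIdx τ n (i + 1)) :
    blockOf τ n j = i := by
  have hle : blockOf τ n j ≤ i := Nat.sInf_le h2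
  have hge : i ≤ blockOf τ n j := by
    by_contra h
    push_neg at h
    have hmem : j ≤ mIdx τ n (blockOf τ n j + 1) :=
      Nat.sInf_mem (⟨i, h2⟩ : {i | j ≤ mIdx τ n (i + 1)}.Nonempty)
    have : mIdx τ n (blockOf τ n j + 1) ≤ mIdx τ n i := mIdx_mono τ n (by omega)
    omega
  omega

lemma tauHat_eq {i j : ℕ} (h1 : mIdx τ n i < j) (h2 : j ≤ mIdx τ n (i + 1)) :
    tauHat τ n j = sigmaAvg τ (mIdx τ n i + 1) (mIdx τ n (i + 1)) := by
  unfold tauHat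
  rw [blockOf_eq τ n h1 h2]

lemma sum_Ioc_eq_sigma {m k : ℕ} (h : m < k) :
    ∑ r ∈ Finset.Ioc m k, τ r = ((k - m : ℕ) : ℝ) * sigmaAvg τ (m + 1) k := by
  unfold sigmaAvg
  rw [Finset.Icc_add_one_left_eq_Ioc]
  have hd : k - (m + 1) + 1 = k - m := by omega
  rw [hd]
  have hne : ((k - m : ℕ) : ℝ) ≠ 0 := by
    simp only [ne_eq, Nat.cast_eq_zero]; omega
  field_simp

/-- Partial sum over a block: nonnegative. -/
lemma block_partial_sum {i k : ℕ} (hk1 : mIdx τ n i < k) (hk2 : k ≤ mIdx τ n (i + 1))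
    (hkn : k ≤ n) :
    0 ≤ ∑ j ∈ Finset.Ioc (mIdx τ n i) k, (τ j - tauHat τ n j) := by
  set m := mIdx τ n i with hm
  set m' := mIdx τ n (i + 1) with hm'
  have hmn : m < n := by omega
  have hspec := nextIdx_spec τ n hmn
  have hm'eq : m' = nextIdx τ n m := rfl
  have hth : ∀ j ∈ Finset.Ioc m k, tauHat τ n j = sigmaAvg τ (m + 1) m' := by
    intro j hj
    rw [Finset.mem_Ioc] at hj
    exact tauHat_eq τ n hj.1 (le_trans hj.2 hk2)
  rw [Finset.sum_sub_distrib, Finset.sum_congr rfl hth, Finset.sum_const,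
    Nat.card_Ioc, sum_Ioc_eq_sigma τ hk1, sub_nonneg, nsmul_eq_mul]
  have hmin : sigmaAvg τ (m + 1) m' ≤ sigmaAvg τ (m + 1) k := by
    rw [hm'eq]; exact hspec.2.2 k hk1 hkn
  have hpos : (0 : ℝ) ≤ ((k - m : ℕ) : ℝ) := by positivity
  exact mul_le_mul_of_nonneg_left hmin hpos

/-- Full block sum: zero. -/
lemma block_full_sum {i : ℕ} (h : mIdx τ n i < mIdx τ n (i + 1)) :
    ∑ j ∈ Finset.Ioc (mIdx τ n i) (mIdx τ n (i + 1)), (τ j - tauHat τ n j) = 0 := by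
  set m := mIdx τ n i with hm
  set m' := mIdx τ n (i + 1) with hm'
  have hth : ∀ j ∈ Finset.Ioc m m', tauHat τ n j = sigmaAvg τ (m + 1) m' := by
    intro j hj
    rw [Finset.mem_Ioc] at hj
    exact tauHat_eq τ n hj.1 hj.2
  rw [Finset.sum_sub_distrib, Finset.sum_congr rfl hth, Finset.sum_const,
    Nat.card_Ioc, sum_Ioc_eq_sigma τ h, nsmul_eq_mul, sub_self]

lemma sum_to_mIdx : ∀ i, ∑ j ∈ Finset.Ioc 0 (mIdx τ n i), (τ j - tauHat τ n j) = 0 := by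
  intro i
  induction i with
  | zero => simp [mIdx]
  | succ i ih =>
    rcases lt_or_eq_of_le (mIdx_mono τ n (Nat.le_succ i)) with h | h
    · rw [← Finset.sum_Ioc_consecutive _ (Nat.zero_le _) (le_of_lt h), ih,
        block_full_sum τ n h, add_zero]
    · rw [← h, ih]

end Aux

/-- Partial sums: `Σ_{j=1}^k (τ_j − τ̂_j) ≥ 0` for every `k = 1, …, n`, with equality
at every block endpoint `m_i`, `i ≥ 1`. -/
theorem stmt11 (n : ℕ) (hn : 1 ≤ n) (τ : ℕ → ℝ) :
    (∀ k : ℕ, 1 ≤ k → k ≤ n →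
      0 ≤ ∑ j ∈ Finset.Icc 1 k, (τ j - tauHat τ n j)) ∧
    (∀ i : ℕ, 1 ≤ i →
      ∑ j ∈ Finset.Icc 1 (mIdx τ n i), (τ j - tauHat τ n j) = 0) := by
  constructor
  · intro k hk1 hk2
    obtain ⟨hb1, hb2⟩ := blockOf_spec τ n hk1 hk2
    rw [show Finset.Icc 1 k = Finset.Ioc 0 k by ext; simp; omega,
      ← Finset.sum_Ioc_consecutive _ (Nat.zero_le (mIdx τ n (blockOf τ n k))) (le_of_lt hb1),
      sum_to_mIdx τ n, zero_add]
    exact block_partial_sum τ n hb1 hb2 hk2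
  · intro i _
    rw [show Finset.Icc 1 (mIdx τ n i) = Finset.Ioc 0 (mIdx τ n i) by ext; simp; omega]
    exact sum_to_mIdx τ n i
end
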